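/- Assume (F0)-(F3) and (F5). Let t ∈ [0,T], let u₁, u₂ ∈ X with u₁ ≠ u₂, and let s_k, t_k be sequences with 0 ≤ s_k ≤ t_k ≤ T for every k, s_k → t and t_k → t as k → ∞. Let v_k : [s_k, t_k] → X be C¹ curves with v_k(t_k) → u₁ and v_k(s_k) → u₂ as k → ∞, and suppose there exists M > 0 with ‖v_k(r)‖ ≤ M for every r ∈ [s_k, t_k] and every k. Then there exist δ > 0 (depending only on t, M, u₁, u₂) and k₀ ∈ ℕ such that ∫_{s_k}^{t_k} ‖∇ₓF(r, v_k(r))‖ ‖v̇_k(r)‖ dr > δ for every k ≥ k₀. -/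

import Mathlib

/-!
Near the starting point `u₂` the isolated critical points of `F t` leave a thin annulus
`r₁ ≤ ‖x - u₂‖ ≤ r₂` free of critical points, and by compactness and joint continuity of `∇ₓF`
the gradient stays above some `c > 0` on this annulus for all times close to `t`. For large `k`
the curve `v_k` starts inside the annulus and ends outside it, so on some subinterval it crosses
the annulus, travelling a length at least `r₂ - r₁` while `‖∇ₓF‖ ≥ c`; hence the dissipation
integral is at least `c (r₂ - r₁)`.
-/

open Set Filter Topology MeasureTheory

theorem exists_first_hitting_time {g : ℝ → ℝ} {p q c : ℝ} (hpq : p ≤ q)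
    (hg : ContinuousOn g (Icc p q)) (hp : g p < c) (hq : c ≤ g q) :
    ∃ b ∈ Icc p q, g b = c ∧ ∀ τ ∈ Ico p b, g τ < c := by
  set A := Icc p q ∩ g ⁻¹' Ici c
  have hA : IsClosed A := hg.preimage_isClosed_of_isClosed isClosed_Icc isClosed_Ici
  have hbdd : BddBelow A := ⟨p, fun τ hτ => hτ.1.1⟩
  have hbA : sInf A ∈ A := hA.csInf_mem ⟨q, right_mem_Icc.2 hpq, hq⟩ hbdd
  have hbelow : ∀ τ ∈ Ico p (sInf A), g τ < c := fun τ hτ =>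
    not_le.1 fun h => hτ.2.not_ge (csInf_le hbdd ⟨⟨hτ.1, hτ.2.le.trans hbA.1.2⟩, h⟩)
  refine ⟨sInf A, hbA.1, le_antisymm ?_ hbA.2, hbelow⟩
  -- the intermediate value theorem yields a point of `[p, sInf A]` where `g = c`; it lies in `A`
  obtain ⟨τ, hτ, hgτ⟩ := intermediate_value_Icc hbA.1.1 (hg.mono (Icc_subset_Icc_right hbA.1.2))
    ⟨hp.le, hbA.2⟩
  obtain rfl : τ = sInf A := le_antisymm hτ.2
    (csInf_le hbdd ⟨⟨hτ.1, hτ.2.trans hbA.1.2⟩, hgτ.ge⟩)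
  exact hgτ.le

theorem exists_last_exit_time {g : ℝ → ℝ} {p q c : ℝ} (hpq : p ≤ q)
    (hg : ContinuousOn g (Icc p q)) (hp : g p ≤ c) (hq : c < g q) :
    ∃ a ∈ Icc p q, g a = c ∧ ∀ τ ∈ Ioc a q, c < g τ := by
  set A := Icc p q ∩ g ⁻¹' Iic c
  have hA : IsClosed A := hg.preimage_isClosed_of_isClosed isClosed_Icc isClosed_Iic
  have hbdd : BddAbove A := ⟨q, fun τ hτ => hτ.1.2⟩
  have haA : sSup A ∈ A := hA.csSup_mem ⟨p, left_mem_Icc.2 hpq, hp⟩ hbdd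
  have habove : ∀ τ ∈ Ioc (sSup A) q, c < g τ := fun τ hτ =>
    not_le.1 fun h => hτ.1.not_ge (le_csSup hbdd ⟨⟨haA.1.1.trans hτ.1.le, hτ.2⟩, h⟩)
  refine ⟨sSup A, haA.1, le_antisymm haA.2 ?_, habove⟩
  obtain ⟨τ, hτ, hgτ⟩ := intermediate_value_Icc haA.1.2 (hg.mono (Icc_subset_Icc_left haA.1.1))
    ⟨haA.2, hq.le⟩
  obtain rfl : τ = sSup A := le_antisymm
    (le_csSup hbdd ⟨⟨haA.1.1.trans hτ.1, hτ.2⟩, hgτ.le⟩) hτ.1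
  exact hgτ.ge

theorem exists_Icc_crossing {g : ℝ → ℝ} {p q r₁ r₂ : ℝ} (hpq : p ≤ q)
    (hg : ContinuousOn g (Icc p q)) (hp : g p < r₁) (hr : r₁ < r₂) (hq : r₂ < g q) :
    ∃ a b, p ≤ a ∧ a ≤ b ∧ b ≤ q ∧ g a = r₁ ∧ g b = r₂ ∧ MapsTo g (Icc a b) (Icc r₁ r₂) := by
  obtain ⟨b, hb, hgb, hbelow⟩ := exists_first_hitting_time hpq hg (hp.trans hr) hq.le
  obtain ⟨a, ha, hga, habove⟩ := exists_last_exit_time hb.1 (hg.mono (Icc_subset_Icc_right hb.2))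
    hp.le (hgb ▸ hr)
  refine ⟨a, b, ha.1, ha.2, hb.2, hga, hgb, fun τ hτ => ⟨?_, ?_⟩⟩
  · rcases hτ.1.eq_or_lt with rfl | h
    · exact hga.ge
    · exact (habove τ ⟨h, hτ.2⟩).le
  · rcases hτ.2.eq_or_lt with rfl | h
    · exact hgb.le
    · exact (hbelow τ ⟨ha.1.trans hτ.1, h⟩).le

section

variable {E : Type*} [NormedAddCommGroup E] [NormedSpace ℝ E] [CompleteSpace E]

theorem norm_sub_le_integral_norm_deriv {γ γ' : ℝ → E} {a b : ℝ} (hab : a ≤ b)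
    (hγ : ∀ τ ∈ Icc a b, HasDerivWithinAt γ (γ' τ) (Icc a b) τ)
    (hγ' : ContinuousOn γ' (Icc a b)) :
    ‖γ b - γ a‖ ≤ ∫ τ in a..b, ‖γ' τ‖ := by
  have hFTC : ∫ τ in a..b, γ' τ = γ b - γ a :=
    intervalIntegral.integral_eq_sub_of_hasDeriv_right_of_le hab
      (fun τ hτ => (hγ τ hτ).continuousWithinAt)
      (fun τ hτ => (hγ τ (Ioo_subset_Icc_self hτ)).mono_of_mem_nhdsWithin
        (Icc_mem_nhdsGT_of_mem ⟨hτ.1.le, hτ.2⟩))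
      (hγ'.intervalIntegrable_of_Icc hab)
  exact hFTC ▸ intervalIntegral.norm_integral_le_integral_norm hab

theorem mul_sub_le_integral_of_crossing {γ γ' : ℝ → E} {w : ℝ → ℝ} {p q r₁ r₂ c : ℝ} {x₀ : E}
    (hpq : p ≤ q) (hγ : ∀ τ ∈ Icc p q, HasDerivWithinAt γ (γ' τ) (Icc p q) τ)
    (hγ' : ContinuousOn γ' (Icc p q)) (hw : ContinuousOn w (Icc p q))
    (hw₀ : ∀ τ ∈ Icc p q, 0 ≤ w τ) (hc : 0 ≤ c) (hr : r₁ < r₂)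
    (hp : γ p ∈ Metric.ball x₀ r₁) (hq : γ q ∉ Metric.closedBall x₀ r₂)
    (hcw : ∀ τ ∈ Icc p q, γ τ ∈ Metric.closedBall x₀ r₂ \ Metric.ball x₀ r₁ → c ≤ w τ) :
    c * (r₂ - r₁) ≤ ∫ τ in p..q, w τ * ‖γ' τ‖ := by
  have hγc : ContinuousOn γ (Icc p q) := fun τ hτ => (hγ τ hτ).continuousWithinAt
  rw [Metric.mem_ball] at hp
  rw [Metric.mem_closedBall, not_le] at hq
  obtain ⟨a, b, hpa, hab, hbq, hga, hgb, hmaps⟩ :=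
    exists_Icc_crossing (g := fun τ => dist (γ τ) x₀) hpq
      ((continuous_id.dist continuous_const).comp_continuousOn hγc) hp hr hq
  have hsub : Icc a b ⊆ Icc p q := Icc_subset_Icc hpa hbq
  have hint : IntervalIntegrable (fun τ => w τ * ‖γ' τ‖) volume p q :=
    (hw.mul hγ'.norm).intervalIntegrable_of_Icc hpq
  calc c * (r₂ - r₁) ≤ c * ‖γ b - γ a‖ := by
        gcongr
        rw [← hga, ← hgb, ← dist_eq_norm]
        linarith [dist_triangle (γ b) (γ a) x₀]
    _ ≤ c * ∫ τ in a..b, ‖γ' τ‖ := by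
        gcongr
        exact norm_sub_le_integral_norm_deriv hab
          (fun τ hτ => (hγ τ (hsub hτ)).mono hsub) (hγ'.mono hsub)
    _ = ∫ τ in a..b, c * ‖γ' τ‖ := (intervalIntegral.integral_const_mul _ _).symm
    _ ≤ ∫ τ in a..b, w τ * ‖γ' τ‖ := by
        refine intervalIntegral.integral_mono_on hab
          ((hγ'.mono hsub).norm.intervalIntegrable_of_Icc hab |>.const_mul c)
          (((hw.mul hγ'.norm).mono hsub).intervalIntegrable_of_Icc hab) fun τ hτ => ?_
        have hannulus : γ τ ∈ Metric.closedBall x₀ r₂ \ Metric.ball x₀ r₁ :=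
          ⟨(hmaps hτ).2, not_lt.2 (hmaps hτ).1⟩
        exact mul_le_mul_of_nonneg_right (hcw τ (hsub hτ) hannulus) (norm_nonneg _)
    _ ≤ ∫ τ in p..q, w τ * ‖γ' τ‖ :=
        intervalIntegral.integral_mono_interval hpa hab hbq
          ((ae_restrict_mem measurableSet_Ioc).mono fun τ hτ =>
            mul_nonneg (hw₀ τ (Ioc_subset_Icc_self hτ)) (norm_nonneg _)) hint

end

theorem eventually_forall_Icc_of_tendsto {ι : Type*} {l : Filter ι} {a b : ι → ℝ} {t : ℝ}
    {P : ℝ → Prop} (ha : Tendsto a l (𝓝 t)) (hb : Tendsto b l (𝓝 t)) (hP : ∀ᶠ τ in 𝓝 t, P τ) :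
    ∀ᶠ i in l, ∀ τ ∈ Icc (a i) (b i), P τ := by
  obtain ⟨m, M, ⟨hm, hM⟩, hsub⟩ := mem_nhds_iff_exists_Ioo_subset.1 hP
  filter_upwards [ha.eventually (eventually_gt_nhds hm), hb.eventually (eventually_lt_nhds hM)]
    with i hai hbi τ hτ
  exact hsub ⟨hai.trans_le hτ.1, hτ.2.trans_lt hbi⟩

theorem exists_annulus_forall_ne_zero {X Y : Type*} [PseudoMetricSpace X] [TopologicalSpace Y]
    [Zero Y] [T1Space Y] {g : X → Y} (hg : Continuous g) {u : X}
    (hiso : g u = 0 → ∃ ρ > 0, ∀ x, g x = 0 → x ∈ Metric.ball u ρ → x = u) {d : ℝ} (hd : 0 < d) :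
    ∃ r₁ r₂, 0 < r₁ ∧ r₁ < r₂ ∧ r₂ < d ∧
      ∀ x ∈ Metric.closedBall u r₂ \ Metric.ball u r₁, g x ≠ 0 := by
  obtain ⟨ρ, hρ, hball⟩ : ∃ ρ > 0, ∀ x ∈ Metric.ball u ρ, x ≠ u → g x ≠ 0 := by
    by_cases hu : g u = 0
    · obtain ⟨ρ, hρ, h⟩ := hiso hu
      exact ⟨ρ, hρ, fun x hx hxu hgx => hxu (h x hgx hx)⟩
    · obtain ⟨ρ, hρ, h⟩ := Metric.isOpen_iff.1 (isOpen_compl_singleton.preimage hg) u hu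
      exact ⟨ρ, hρ, fun x hx _ => h hx⟩
  set r := min (ρ / 2) (d / 2)
  have hr : 0 < r := lt_min (half_pos hρ) (half_pos hd)
  refine ⟨r / 2, r, half_pos hr, half_lt_self hr,
    (min_le_right _ _).trans_lt (half_lt_self hd), fun x hx => hball x ?_ ?_⟩
  · exact Metric.closedBall_subset_ball ((min_le_left _ _).trans_lt (half_lt_self hρ)) hx.1
  · rintro rfl
    exact hx.2 (Metric.mem_ball_self (half_pos hr))

theorem exists_pos_eventually_forall_le_norm {α β E : Type*} [TopologicalSpace α]
    [TopologicalSpace β] [NormedAddCommGroup E] {G : α → β → E} {s : Set α} {K : Set β} {t : α}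
    (hG : ContinuousOn (fun p : α × β => G p.1 p.2) (s ×ˢ univ)) (ht : t ∈ s)
    (hK : IsCompact K) (hne : ∀ x ∈ K, G t x ≠ 0) :
    ∃ c > 0, ∀ᶠ r in 𝓝[s] t, ∀ x ∈ K, c ≤ ‖G r x‖ := by
  have hGt : ContinuousOn (fun x => ‖G t x‖) K :=
    (hG.comp (continuous_const.prodMk continuous_id).continuousOn fun _ _ => ⟨ht, trivial⟩).norm
  obtain ⟨c, hc, hcK⟩ := hK.exists_forall_le' hGt fun x hx => norm_pos_iff.2 (hne x hx)
  refine ⟨c / 2, half_pos hc, ?_⟩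
  have hlocal : ∀ x ∈ K, ∀ᶠ p in 𝓝[s] t ×ˢ 𝓝 x, c / 2 < ‖G p.1 p.2‖ := by
    intro x hx
    rw [← nhdsWithin_univ x, ← nhdsWithin_prod_eq]
    exact (hG (t, x) ⟨ht, trivial⟩).norm.eventually
      (lt_mem_nhds ((half_lt_self hc).trans_le (hcK x hx)))
  have htube : ∀ᶠ p in 𝓝[s] t ×ˢ 𝓝ˢ K, c / 2 < ‖G p.1 p.2‖ :=
    hK.mem_prod_nhdsSet_of_forall hlocal
  exact htube.curry.mono fun r hr x hx =>
    (hr.self_of_nhdsSet x hx).le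

theorem continuousOn_gradient_of_contDiffOn {E X : Type*} [NormedAddCommGroup E]
    [NormedSpace ℝ E] [NormedAddCommGroup X] [InnerProductSpace ℝ X] [CompleteSpace X]
    {f : E → X → ℝ} {g : E → X → X} {s : Set E} (hs : UniqueDiffOn ℝ s)
    (hf : ContDiffOn ℝ 1 (fun p : E × X => f p.1 p.2) (s ×ˢ univ))
    (hg : ∀ t ∈ s, ∀ x, HasGradientAt (f t) (g t x) x) :
    ContinuousOn (fun p : E × X => g p.1 p.2) (s ×ˢ univ) := by
  set Df := fderivWithin ℝ (fun p : E × X => f p.1 p.2) (s ×ˢ univ)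
  have hDf : ContinuousOn Df (s ×ˢ univ) :=
    hf.continuousOn_fderivWithin (hs.prod uniqueDiffOn_univ) le_rfl
  -- the gradient is the Riesz representative of the `X`-component of the full derivative
  have hg_eq : ∀ p ∈ s ×ˢ univ, g p.1 p.2 =
      (InnerProductSpace.toDual ℝ X).symm ((Df p).comp (ContinuousLinearMap.inr ℝ E X)) := by
    rintro ⟨t, x⟩ hp
    have hslice : HasFDerivAt (fun y : X => ((t, y) : E × X)) (ContinuousLinearMap.inr ℝ E X) x :=
      (hasFDerivAt_const t x).prodMk (hasFDerivAt_id x)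
    have hpartial : HasFDerivAt (f t) ((Df (t, x)).comp (ContinuousLinearMap.inr ℝ E X)) x := by
      have := ((hf.differentiableOn one_ne_zero) _ hp).hasFDerivWithinAt.comp x
        (hslice.hasFDerivWithinAt (s := univ)) (fun y _ => ⟨hp.1, trivial⟩)
      simpa only [hasFDerivWithinAt_univ, Function.comp_def] using this
    rw [← (hg t hp.1 x).hasFDerivAt.unique hpartial, LinearIsometryEquiv.symm_apply_apply]
  refine ContinuousOn.congr ?_ hg_eq
  exact ((InnerProductSpace.toDual ℝ X).symm.continuous.comp
    ((ContinuousLinearMap.compL ℝ X (E × X) ℝ).flip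
      (ContinuousLinearMap.inr ℝ E X)).continuous).comp_continuousOn hDf

theorem dissipation_bounded_below
    {X : Type*} [NormedAddCommGroup X] [InnerProductSpace ℝ X] [FiniteDimensional ℝ X]
    (T : ℝ) (hT : 0 < T)
    (F : ℝ → X → ℝ) (gradF : ℝ → X → X)
    -- (F0)
    (hF0 : ContDiffOn ℝ 1 (fun p : ℝ × X => F p.1 p.2) (Set.Icc 0 T ×ˢ Set.univ))
    (hgradF : ∀ t ∈ Set.Icc 0 T, ∀ x : X, HasGradientAt (F t) (gradF t x) x)
    -- (F5): critical points are isolated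
    (hF5 : ∀ t ∈ Set.Icc 0 T, ∀ x : X, gradF t x = 0 →
      ∃ r > (0 : ℝ), ∀ y : X, gradF t y = 0 → y ∈ Metric.ball x r → y = x)
    -- data of the proposition
    (t : ℝ) (ht : t ∈ Set.Icc 0 T)
    (u₁ u₂ : X) (hu12 : u₁ ≠ u₂)
    (s k_t : ℕ → ℝ)
    (hsk : ∀ k : ℕ, 0 ≤ s k ∧ s k ≤ k_t k ∧ k_t k ≤ T)
    (hs : Filter.Tendsto s Filter.atTop (𝓝 t))
    (htk : Filter.Tendsto k_t Filter.atTop (𝓝 t))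
    -- the C¹ curves v_k with derivatives v'_k
    (v v' : ℕ → ℝ → X)
    (hv' : ∀ k : ℕ, ∀ r ∈ Set.Icc (s k) (k_t k),
      HasDerivWithinAt (v k) (v' k r) (Set.Icc (s k) (k_t k)) r)
    (hv'c : ∀ k : ℕ, ContinuousOn (v' k) (Set.Icc (s k) (k_t k)))
    (hv1 : Filter.Tendsto (fun k => v k (k_t k)) Filter.atTop (𝓝 u₁))
    (hv2 : Filter.Tendsto (fun k => v k (s k)) Filter.atTop (𝓝 u₂)) :
    ∃ δ > (0 : ℝ), ∃ k₀ : ℕ, ∀ k ≥ k₀,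
      δ < ∫ r in (s k)..(k_t k), ‖gradF r (v k r)‖ * ‖v' k r‖ := by
  have hG := continuousOn_gradient_of_contDiffOn (uniqueDiffOn_Icc hT) hF0 hgradF
  have hGt : Continuous (gradF t) := continuousOn_univ.1 <|
    hG.comp (continuous_const.prodMk continuous_id).continuousOn fun _ _ => ⟨ht, trivial⟩
  obtain ⟨r₁, r₂, hr₁, hr, hr₂, hK⟩ :=
    exists_annulus_forall_ne_zero hGt (hF5 t ht u₂) (dist_pos.2 hu12)
  obtain ⟨c, hc, hcK⟩ := exists_pos_eventually_forall_le_norm hG ht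
    ((isCompact_closedBall u₂ r₂).diff Metric.isOpen_ball) hK
  have hlarge : ∀ᶠ k in atTop,
      c * (r₂ - r₁) ≤ ∫ r in (s k)..(k_t k), ‖gradF r (v k r)‖ * ‖v' k r‖ := by
    have hout : (Metric.closedBall u₂ r₂)ᶜ ∈ 𝓝 u₁ :=
      Metric.isClosed_closedBall.isOpen_compl.mem_nhds (by simpa using hr₂)
    filter_upwards [eventually_forall_Icc_of_tendsto hs htk (eventually_nhdsWithin_iff.1 hcK),
      hv2 (Metric.ball_mem_nhds u₂ hr₁), hv1 hout] with k hnear hstart hend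
    have hsub : Icc (s k) (k_t k) ⊆ Icc 0 T := Icc_subset_Icc (hsk k).1 (hsk k).2.2
    have hvk : ContinuousOn (v k) (Icc (s k) (k_t k)) :=
      fun τ hτ => (hv' k τ hτ).continuousWithinAt
    refine mul_sub_le_integral_of_crossing (hsk k).2.1 (hv' k) (hv'c k) ?_
      (fun _ _ => norm_nonneg _) hc.le hr hstart hend fun τ hτ => hnear τ hτ (hsub hτ) _
    exact (hG.comp (continuousOn_id.prodMk hvk) fun τ hτ => ⟨hsub hτ, trivial⟩).norm
  obtain ⟨k₀, hk₀⟩ := eventually_atTop.1 hlarge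
  have hgain : 0 < c * (r₂ - r₁) := mul_pos hc (sub_pos.2 hr)
  exact ⟨c * (r₂ - r₁) / 2, half_pos hgain, k₀,
    fun k hk => (half_lt_self hgain).trans_le (hk₀ k hk)⟩
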